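/- arXiv:2502.16049 — 4 statements merged into one kernel-verified Lean document; each statement's English description precedes it below -/
import Mathlib

section
/- Let M be a persistence module over a finite connected poset P, and let J ⊆ I be finite connected subposets of P. Then rk^M(I) ≤ rk^M(J). -/
open CategoryTheory CategoryTheory.Limits
open scoped ENNReal

noncomputable section

/-- A subposet `S` is connected if any two of its points are joined by a zigzag of
comparabilities inside `S`. -/
def PosetConn {α : Type*} [Preorder α] (S : Set α) : Prop :=
  ∀ p ∈ S, ∀ q ∈ S,
    Relation.ReflTransGen (fun a b => a ∈ S ∧ b ∈ S ∧ (a ≤ b ∨ b ≤ a)) p q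

/-- An interval of a poset: a connected convex subposet. -/
def IsIntervalIn {α : Type*} [Preorder α] (S : Set α) : Prop :=
  PosetConn S ∧ S.OrdConnected

/-- the restriction of a persistence module to a subposet, viewed in the category of all
`𝕜`-vector spaces -/
def restrictV {𝕜 : Type} [Field 𝕜] {P : Type} [PartialOrder P]
    (M : P ⥤ FGModuleCat 𝕜) (S : Set P) : ↥S ⥤ ModuleCat 𝕜 :=
  Monotone.functor (f := (Subtype.val : ↥S → P)) (fun _ _ h => h) ⋙ M ⋙ forget₂ _ _

/-- the canonical limit-to-colimit map of the restriction of `M` to `S`, computed through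
the point `p` (it is independent of `p` when `S` is connected) -/
def limToColim {𝕜 : Type} [Field 𝕜] {P : Type} [PartialOrder P]
    (M : P ⥤ FGModuleCat 𝕜) (S : Set P) (p : ↥S) :
    (limit (restrictV M S) : ModuleCat 𝕜) →ₗ[𝕜] (colimit (restrictV M S) : ModuleCat 𝕜) :=
  (limit.π (restrictV M S) p ≫ colimit.ι (restrictV M S) p).hom

/-- the generalized rank of `M` over the subposet `S`, computed through the point `p` -/
def genRankAt {𝕜 : Type} [Field 𝕜] {P : Type} [PartialOrder P]
    (M : P ⥤ FGModuleCat 𝕜) (S : Set P) (p : ↥S) : ℕ :=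
  Module.finrank 𝕜 (LinearMap.range (limToColim M S p))


/-! The limit-to-colimit map of `M|_I`, computed at a point of `J`, factors as
`lim M|_I → lim M|_J → colim M|_J → colim M|_I` with the limit-to-colimit map of `M|_J` in the
middle; connectedness of `I` makes the choice of point irrelevant, and the rank of a composite is
at most the rank of its middle factor. -/

theorem LinearMap.finrank_range_comp_comp_le {K U V W X : Type*} [DivisionRing K]
    [AddCommGroup U] [Module K U] [AddCommGroup V] [Module K V] [AddCommGroup W] [Module K W]
    [AddCommGroup X] [Module K X] (h : U →ₗ[K] V) (f : V →ₗ[K] W) (g : W →ₗ[K] X)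
    [Module.Finite K (LinearMap.range f)] :
    Module.finrank K (LinearMap.range (g ∘ₗ f ∘ₗ h)) ≤ Module.finrank K (LinearMap.range f) :=
  have hle : LinearMap.range (f ∘ₗ h) ≤ LinearMap.range f := LinearMap.range_comp_le_range h f
  have : Module.Finite K (LinearMap.range (f ∘ₗ h)) := Submodule.finiteDimensional_of_le hle
  LinearMap.range_comp (f ∘ₗ h) g ▸
    (Submodule.finrank_map_le g _).trans (Submodule.finrank_mono hle)

theorem CategoryTheory.Limits.limit_π_comp_colimit_ι_eq_pre_comp {C D E : Type*} [Category C]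
    [Category D] [Category E] (F : C ⥤ D) (G : E ⥤ C) [HasLimit F] [HasColimit F]
    [HasLimit (G ⋙ F)] [HasColimit (G ⋙ F)] (j : E) :
    limit.π F (G.obj j) ≫ colimit.ι F (G.obj j) =
      limit.pre F G ≫ (limit.π (G ⋙ F) j ≫ colimit.ι (G ⋙ F) j) ≫ colimit.pre F G := by
  simp

section

variable {𝕜 : Type} [Field 𝕜] {P : Type} [PartialOrder P] (M : P ⥤ FGModuleCat 𝕜)

instance instFiniteRangeLimToColim (S : Set P) (p : ↥S) :
    Module.Finite 𝕜 (LinearMap.range (limToColim M S p)) :=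
  have : Module.Finite 𝕜 ((restrictV M S).obj p) := (inferInstance : Module.Finite 𝕜 (M.obj p.1))
  Submodule.finiteDimensional_of_le (LinearMap.range_comp_le_range _ _)

theorem limToColim_eq_of_le {S : Set P} {p q : ↥S} (h : p ≤ q) :
    limToColim M S p = limToColim M S q := by
  rw [limToColim, limToColim, ← limit.w _ (homOfLE h), Category.assoc, colimit.w]

theorem limToColim_eq_of_posetConn {S : Set P} (hS : PosetConn S) (p q : ↥S) :
    limToColim M S p = limToColim M S q := by
  suffices ∀ b, Relation.ReflTransGen (fun a b => a ∈ S ∧ b ∈ S ∧ (a ≤ b ∨ b ≤ a)) p.1 b →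
      ∀ hb : b ∈ S, limToColim M S p = limToColim M S ⟨b, hb⟩ from
    this q (hS p p.2 q q.2) q.2
  intro b hpb
  induction hpb with
  | refl => exact fun _ => rfl
  | tail _ hab ih =>
    obtain ⟨ha, hb, hab | hba⟩ := hab
    · exact fun _ => (ih ha).trans (limToColim_eq_of_le M hab)
    · exact fun _ => (ih ha).trans (limToColim_eq_of_le M (p := ⟨_, hb⟩) (q := ⟨_, ha⟩) hba).symm

/-- The inclusion `J ⊆ I` as a functor of subposets; `restrictV M J` is definitionally
`inclusionFunctor hJI ⋙ restrictV M I`. -/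
def inclusionFunctor {I J : Set P} (hJI : J ⊆ I) : ↥J ⥤ ↥I :=
  Monotone.functor (f := Set.inclusion hJI) fun _ _ h => h

theorem limToColim_inclusion {I J : Set P} (hJI : J ⊆ I) (p : ↥J) :
    limToColim M I ((inclusionFunctor hJI).obj p) =
      (colimit.pre (restrictV M I) (inclusionFunctor hJI)).hom ∘ₗ limToColim M J p ∘ₗ
        (limit.pre (restrictV M I) (inclusionFunctor hJI)).hom := by
  rw [limToColim, limit_π_comp_colimit_ι_eq_pre_comp]
  rfl

end

theorem statement_1_general {𝕜 : Type} [Field 𝕜] {P : Type} [PartialOrder P]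
    (M : P ⥤ FGModuleCat 𝕜)
    (I J : Set P) (hJI : J ⊆ I) (hIconn : PosetConn I)
    (pI : ↥I) (pJ : ↥J) :
    genRankAt M I pI ≤ genRankAt M J pJ := by
  rw [genRankAt, limToColim_eq_of_posetConn M hIconn pI ((inclusionFunctor hJI).obj pJ),
    limToColim_inclusion M hJI pJ]
  exact LinearMap.finrank_range_comp_comp_le _ (limToColim M J pJ) _

/-- For finite connected subposets `J ⊆ I` of a finite connected poset `P`
and a persistence module `M` over `P`, one has `rk^M(I) ≤ rk^M(J)`. -/
theorem statement_1 {𝕜 : Type} [Field 𝕜] {P : Type} [PartialOrder P] [Fintype P]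
    (hP : PosetConn (Set.univ : Set P)) (M : P ⥤ FGModuleCat 𝕜)
    (I J : Set P) (hJI : J ⊆ I) (hIconn : PosetConn I) (hJconn : PosetConn J)
    (pI : ↥I) (pJ : ↥J) :
    genRankAt M I pI ≤ genRankAt M J pJ :=
  statement_1_general M I J hJI hIconn pI pJ

end
end

section
/- For every p ∈ ZZ × ℤ and every integer δ ≥ 0, the counterpart in ℤ² of the worm ⊞²_δ(p) is an interval of ℤ², i.e., a connected convex subposet of ℤ² with the componentwise order. -/
open CategoryTheory CategoryTheory.Limits
open scoped ENNReal

noncomputable section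

/-- The zigzag poset `ZZ`, the subposet of `ℤᵒᵖ × ℤ` of points `(i,j)` with `j ∈ {i, i-1}`. -/
def ZZSet : Set (ℤᵒᵈ × ℤ) :=
  {p | p.2 = OrderDual.ofDual p.1 ∨ p.2 = OrderDual.ofDual p.1 - 1}

/-- The quasi zigzag poset `ZZ × ℤ` with the product order. -/
def QZ : Type := ↥ZZSet × ℤ

instance : PartialOrder QZ := inferInstanceAs (PartialOrder (↥ZZSet × ℤ))

/-- the `ZZ`-component of a point of the quasi zigzag poset -/
def QZ.zz (p : QZ) : ↥ZZSet := (show ↥ZZSet × ℤ from p).1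

/-- the `ℤ`-component of a point of the quasi zigzag poset -/
def QZ.t (p : QZ) : ℤ := (show ↥ZZSet × ℤ from p).2

/-- The identification of `ZZ × ℤ` with `ℤ²` as sets: consecutive elements of `ZZ`
are indexed by consecutive x-coordinates. -/
def toZ2 (p : QZ) : ℤ × ℤ := (OrderDual.ofDual p.zz.val.1 + p.zz.val.2, p.t)

/-- the `∞`-distance on `ℤ²` -/
def dInf (a b : ℤ × ℤ) : ℤ := max |a.1 - b.1| |a.2 - b.2|

/-- the `δ`-square of points of `ZZ × ℤ` centered at the `ℤ²`-point `c` -/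
def sqAt (c : ℤ × ℤ) (δ : ℤ) : Set QZ := {z | dInf c (toZ2 z) ≤ δ}

/-- The worm centered at `p` with width `δ`: the union of the `δ`-square at `p` with the
`δ`-squares centered at `p ± (δ, -δ)`. -/
def worm (p : QZ) (δ : ℤ) : Set QZ :=
  sqAt (toZ2 p) δ ∪ sqAt (toZ2 p + (δ, -δ)) δ ∪ sqAt (toZ2 p - (δ, -δ)) δ

lemma center_mem_worm (p : QZ) {δ : ℤ} (hδ : 0 ≤ δ) : p ∈ worm p δ :=
  Or.inl (Or.inl (by simp [sqAt, dInf, hδ]))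

/-!
Since `toZ2` is surjective and the worm is the preimage of a union of three `∞`-boxes of `ℤ²`,
its image is that union. A box is closed under `⊓`, so any two of its points are joined through
their infimum, and all three boxes contain the center, so the union is connected. Convexity is
linear arithmetic: the boxes are strung along an antidiagonal, each overlapping the middle one.
-/

section PosetConn

variable {α : Type*} [Preorder α] {S T : Set α}

/-- The step relation of the zigzags in the definition of `PosetConn S`. -/
def ComparableIn (S : Set α) (a b : α) : Prop :=
  a ∈ S ∧ b ∈ S ∧ (a ≤ b ∨ b ≤ a)

instance : Std.Symm (ComparableIn S) :=
  ⟨fun _ _ ⟨ha, hb, hab⟩ => ⟨hb, ha, hab.symm⟩⟩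

lemma ComparableIn.mono (hST : S ⊆ T) {a b : α} (h : ComparableIn S a b) :
    ComparableIn T a b :=
  ⟨hST h.1, hST h.2.1, h.2.2⟩

lemma PosetConn.union (hS : PosetConn S) (hT : PosetConn T) {x : α} (hxS : x ∈ S)
    (hxT : x ∈ T) : PosetConn (S ∪ T) := by
  have to_x : ∀ r ∈ S ∪ T, Relation.ReflTransGen (ComparableIn (S ∪ T)) r x := by
    rintro r (hr | hr)
    · exact Relation.ReflTransGen.mono (fun _ _ => ComparableIn.mono Set.subset_union_left) _ _
        (hS r hr x hxS)
    · exact Relation.ReflTransGen.mono (fun _ _ => ComparableIn.mono Set.subset_union_right) _ _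
        (hT r hr x hxT)
  intro p hp q hq
  exact (to_x p hp).trans (symm (to_x q hq))

end PosetConn

lemma posetConn_of_inf_mem {α : Type*} [SemilatticeInf α] {S : Set α}
    (hS : ∀ a ∈ S, ∀ b ∈ S, a ⊓ b ∈ S) : PosetConn S := by
  intro a ha b hb
  have hab := hS a ha b hb
  exact .tail (.single (⟨ha, hab, .inr inf_le_left⟩ : ComparableIn S a (a ⊓ b)))
    (⟨hab, hb, .inl inf_le_right⟩ : ComparableIn S (a ⊓ b) b)

lemma toZ2_surjective : Function.Surjective toZ2 := by
  rintro ⟨x, y⟩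
  obtain ⟨k, hk | hk⟩ := Int.even_or_odd' x
  · refine ⟨⟨⟨(OrderDual.toDual k, k), Or.inl rfl⟩, y⟩, ?_⟩
    simp only [toZ2, QZ.zz, QZ.t, OrderDual.ofDual_toDual, Prod.mk.injEq, and_true]
    omega
  · refine ⟨⟨⟨(OrderDual.toDual (k + 1), k), Or.inr (by simp)⟩, y⟩, ?_⟩
    simp only [toZ2, QZ.zz, QZ.t, OrderDual.ofDual_toDual, Prod.mk.injEq, and_true]
    omega

def box (c : ℤ × ℤ) (δ : ℤ) : Set (ℤ × ℤ) := {q | dInf c q ≤ δ}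

lemma mem_box {c q : ℤ × ℤ} {δ : ℤ} :
    q ∈ box c δ ↔ |c.1 - q.1| ≤ δ ∧ |c.2 - q.2| ≤ δ :=
  max_le_iff (a := |c.1 - q.1|)

lemma posetConn_box (c : ℤ × ℤ) (δ : ℤ) : PosetConn (box c δ) := by
  refine posetConn_of_inf_mem fun a ha b hb => ?_
  simp only [mem_box, abs_le, Prod.fst_inf, Prod.snd_inf] at ha hb ⊢
  omega

def wormZ2 (c : ℤ × ℤ) (δ : ℤ) : Set (ℤ × ℤ) :=
  box c δ ∪ box (c + (δ, -δ)) δ ∪ box (c - (δ, -δ)) δ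

lemma image_toZ2_worm (p : QZ) (δ : ℤ) : toZ2 '' worm p δ = wormZ2 (toZ2 p) δ :=
  Set.image_preimage_eq (wormZ2 (toZ2 p) δ) toZ2_surjective

lemma posetConn_wormZ2 (c : ℤ × ℤ) {δ : ℤ} (hδ : 0 ≤ δ) : PosetConn (wormZ2 c δ) := by
  have hc : c ∈ box c δ := by simp [mem_box, hδ]
  have hc_add : c ∈ box (c + (δ, -δ)) δ := by simp [mem_box, abs_of_nonneg hδ]
  have hc_sub : c ∈ box (c - (δ, -δ)) δ := by simp [mem_box, abs_of_nonneg hδ]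
  exact ((posetConn_box _ _).union (posetConn_box _ _) hc hc_add).union (posetConn_box _ _)
    (Or.inl hc) hc_sub

lemma ordConnected_wormZ2 (c : ℤ × ℤ) (δ : ℤ) : (wormZ2 c δ).OrdConnected := by
  refine ⟨fun x hx y hy z ⟨hxz, hzy⟩ => ?_⟩
  simp only [Prod.le_def] at hxz hzy
  simp only [wormZ2, Set.mem_union, mem_box, abs_le, Prod.fst_add, Prod.snd_add,
    Prod.fst_sub, Prod.snd_sub] at hx hy ⊢
  omega

/-- For every `p ∈ ZZ × ℤ` and every integer `δ ≥ 0`, the counterpart in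
`ℤ²` of the worm `⊞²_δ(p)` is an interval of `ℤ²` with the componentwise order. -/
theorem statement_2 (p : QZ) (δ : ℤ) (hδ : 0 ≤ δ) :
    IsIntervalIn (toZ2 '' worm p δ) := by
  rw [image_toZ2_worm]
  exact ⟨posetConn_wormZ2 _ hδ, ordConnected_wormZ2 _ _⟩

end
end

section
/- Let I ⊆ ZZ × ℤ be a finite subposet whose counterpart I^{ℤ²} is an interval of ℤ². Then every minimal element and every maximal element of I with respect to the ZZ × ℤ order lies on the boundary B_I^{ℤ²}. -/
open CategoryTheory CategoryTheory.Limits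
open scoped ENNReal

noncomputable section

/-- the set of minimal elements of a subposet -/
def minsOf {α : Type*} [PartialOrder α] (S : Set α) : Set α :=
  {p ∈ S | ∀ q ∈ S, q ≤ p → q = p}

/-- the set of maximal elements of a subposet -/
def maxsOf {α : Type*} [PartialOrder α] (S : Set α) : Set α :=
  {p ∈ S | ∀ q ∈ S, p ≤ q → q = p}

/-- `b` covers `a` within the subposet `S` -/
def covIn {α : Type*} [PartialOrder α] (S : Set α) (a b : α) : Prop :=
  a ∈ S ∧ b ∈ S ∧ a < b ∧ ∀ c ∈ S, a < c → c < b → False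

/-- a covering path from `p` to `q` within `S` whose set of points is `P`:
a sequence of covering relations, either all increasing or all decreasing -/
def IsCovPath {α : Type*} [PartialOrder α] (S : Set α) (p q : α) (P : Set α) : Prop :=
  ∃ l : List α,
    (List.Chain' (covIn S) l ∨ List.Chain' (fun a b => covIn S b a) l) ∧
    l.head? = some p ∧ l.getLast? = some q ∧ {x | x ∈ l} = P

/-- the lower fence of `S ⊆ ℤ²`: covering paths through the least upper bounds of
consecutive minima, the minima being sorted by increasing x-coordinate -/
def IsLowerFence (S F : Set (ℤ × ℤ)) : Prop :=
  ∃ l : List (ℤ × ℤ), l.Nodup ∧ {x | x ∈ l} = minsOf S ∧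
    l.Chain' (fun a b => a.1 < b.1) ∧
    ∃ P₁ P₂ : ℤ × ℤ → ℤ × ℤ → Set (ℤ × ℤ),
      (∀ ab ∈ l.zip l.tail, IsCovPath S ab.1 (ab.1 ⊔ ab.2) (P₁ ab.1 ab.2) ∧
        IsCovPath S (ab.1 ⊔ ab.2) ab.2 (P₂ ab.1 ab.2)) ∧
      F = {x | x ∈ l} ∪ ⋃ ab ∈ {ab | ab ∈ l.zip l.tail}, (P₁ ab.1 ab.2 ∪ P₂ ab.1 ab.2)

/-- the upper fence of `S ⊆ ℤ²`: covering paths through the greatest lower bounds of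
consecutive maxima, the maxima being sorted by increasing x-coordinate -/
def IsUpperFence (S F : Set (ℤ × ℤ)) : Prop :=
  ∃ l : List (ℤ × ℤ), l.Nodup ∧ {x | x ∈ l} = maxsOf S ∧
    l.Chain' (fun a b => a.1 < b.1) ∧
    ∃ P₁ P₂ : ℤ × ℤ → ℤ × ℤ → Set (ℤ × ℤ),
      (∀ ab ∈ l.zip l.tail, IsCovPath S ab.1 (ab.1 ⊓ ab.2) (P₁ ab.1 ab.2) ∧
        IsCovPath S (ab.1 ⊓ ab.2) ab.2 (P₂ ab.1 ab.2)) ∧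
      F = {x | x ∈ l} ∪ ⋃ ab ∈ {ab | ab ∈ l.zip l.tail}, (P₁ ab.1 ab.2 ∪ P₂ ab.1 ab.2)

/-- The boundary `B_I` of `S ⊆ ℤ²`: the lower fence, the upper fence, a covering path from
the leftmost minimum `p₀` to the leftmost maximum `q₀` through the top-left corner, and a
covering path from the rightmost minimum `p_s` to the rightmost maximum `q_t` through the
bottom-right corner. -/
def IsBoundary (S B : Set (ℤ × ℤ)) : Prop :=
  ∃ LF UF PL PR : Set (ℤ × ℤ), IsLowerFence S LF ∧ IsUpperFence S UF ∧
    (∃ p₀ q₀, (p₀ ∈ minsOf S ∧ ∀ r ∈ minsOf S, p₀.1 ≤ r.1) ∧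
      (q₀ ∈ maxsOf S ∧ ∀ r ∈ maxsOf S, q₀.1 ≤ r.1) ∧
      IsCovPath S p₀ q₀ PL ∧ (p₀.1, q₀.2) ∈ PL) ∧
    (∃ ps qt, (ps ∈ minsOf S ∧ ∀ r ∈ minsOf S, r.1 ≤ ps.1) ∧
      (qt ∈ maxsOf S ∧ ∀ r ∈ maxsOf S, r.1 ≤ qt.1) ∧
      IsCovPath S ps qt PR ∧ (qt.1, ps.2) ∈ PR) ∧
    B = LF ∪ UF ∪ PL ∪ PR

/-- a path inside `B` connecting all points of `T` -/
def Connects (B T D : Set (ℤ × ℤ)) : Prop := D ⊆ B ∧ T ⊆ D ∧ PosetConn D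

/-- a minimal path inside `B` connecting all points of `T` -/
def IsMinimalConnector (B T D : Set (ℤ × ℤ)) : Prop :=
  Connects B T D ∧ ∀ D' ⊆ D, Connects B T D' → D' = D


/-! A minimal element `p` of `I` has no point of `I` directly below it in its `ZZ`-column, so
`z = toZ2 p` is a bottom point of `S = I^{ℤ²}`: `(z.1, z.2 - 1) ∉ S`. By convexity of `S`, every
minimum `m ≤ z` of `S` lies on the row of `z`, and the next minimum to the right of `m` (if any)
lies strictly below that row and weakly right of `z`. In a convex subset of `ℤ²` covering steps
are unit steps, so a covering path takes every column between its endpoints; hence the boundary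
path leaving `m` to the right, along the row of `m` (the lower-fence path to `m ⊔ m'`, or the path
through the bottom-right corner when `m` is the rightmost minimum), passes through `z`.
Maximal elements are handled dually with the upper fence and the top-left corner path. -/

namespace List

variable {α : Type*} {R : α → α → Prop}

theorem IsChain.rel_of_mem_zip_tail :
    ∀ {l : List α}, l.IsChain R → ∀ {x y : α}, (x, y) ∈ l.zip l.tail → R x y
  | [], _, _, _, hxy | [_], _, _, _, hxy => by simp at hxy
  | a :: b :: l, h, x, y, hxy => by
    rw [isChain_cons_cons] at h
    simp only [tail_cons, zip_cons_cons, mem_cons, Prod.mk.injEq] at hxy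
    rcases hxy with ⟨rfl, rfl⟩ | hxy
    · exact h.1
    · exact h.2.rel_of_mem_zip_tail hxy

theorem exists_mem_zip_tail_or_getLast?_eq :
    ∀ {l : List α} {x : α}, x ∈ l → (∃ y, (x, y) ∈ l.zip l.tail) ∨ l.getLast? = some x
  | [a], x, hx => by simp_all
  | a :: b :: l, x, hx => by
    rcases mem_cons.mp hx with rfl | hx
    · exact Or.inl ⟨b, by simp⟩
    · rcases exists_mem_zip_tail_or_getLast?_eq hx with ⟨y, hy⟩ | hlast
      · exact Or.inl ⟨y, by simp_all⟩
      · exact Or.inr (by rwa [getLast?_cons_cons])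

theorem exists_mem_zip_tail_or_head?_eq :
    ∀ {l : List α} {x : α}, x ∈ l → (∃ y, (y, x) ∈ l.zip l.tail) ∨ l.head? = some x
  | [a], x, hx => by simp_all
  | a :: b :: l, x, hx => by
    rcases mem_cons.mp hx with rfl | hx
    · exact Or.inr rfl
    · rcases exists_mem_zip_tail_or_head?_eq hx with ⟨y, hy⟩ | hhead
      · exact Or.inl ⟨y, by simp_all⟩
      · exact Or.inl ⟨a, by simp_all⟩

theorem mem_of_isChain_le_add_one :
    ∀ {l : List ℤ}, l.IsChain (fun x y => y ≤ x + 1) → ∀ {m n a : ℤ},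
      l.head? = some m → l.getLast? = some n → m ≤ a → a ≤ n → a ∈ l
  | [], _, _, _, _, hm, _, _, _ => by simp at hm
  | [x], _, m, n, a, hm, hn, hma, han => by simp_all; omega
  | x :: y :: l, h, m, n, a, hm, hn, hma, han => by
    rw [isChain_cons_cons] at h
    simp only [head?_cons, Option.some.injEq] at hm
    subst hm
    rcases hma.eq_or_lt with rfl | hma
    · exact mem_cons_self
    · rw [getLast?_cons_cons] at hn
      exact mem_cons_of_mem _ (mem_of_isChain_le_add_one h.2 rfl hn (by omega) han)

theorem Pairwise.head_le {β : Type*} [Preorder β] {l : List β} (h : l.Pairwise (· ≤ ·))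
    {x y : β} (hx : l.head? = some x) (hy : y ∈ l) : x ≤ y := by
  rw [head?_eq_some_head (ne_nil_of_mem hy), Option.some.injEq] at hx
  exact hx ▸ h.rel_head hy

theorem Pairwise.le_getLast {β : Type*} [Preorder β] {l : List β} (h : l.Pairwise (· ≤ ·))
    {x y : β} (hx : l.getLast? = some x) (hy : y ∈ l) : y ≤ x := by
  rw [getLast?_eq_some_getLast (ne_nil_of_mem hy), Option.some.injEq] at hx
  exact hx ▸ h.rel_getLast hy

end List

section Poset

variable {α : Type*} [PartialOrder α] {S P : Set α} {p q : α}

theorem exists_mem_minsOf_le (hS : S.Finite) {x : α} (hx : x ∈ S) : ∃ m ∈ minsOf S, m ≤ x := by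
  obtain ⟨m, hmx, hm⟩ := hS.exists_le_minimal hx
  exact ⟨m, ⟨hm.prop, fun y hy hym => le_antisymm hym (hm.le_of_le hy hym)⟩, hmx⟩

theorem exists_le_mem_maxsOf (hS : S.Finite) {x : α} (hx : x ∈ S) : ∃ m ∈ maxsOf S, x ≤ m := by
  obtain ⟨m, hxm, hm⟩ := hS.exists_le_maximal hx
  exact ⟨m, ⟨hm.prop, fun y hy hmy => le_antisymm (hm.le_of_ge hy hmy) hmy⟩, hxm⟩

theorem isAntichain_minsOf : IsAntichain (· ≤ ·) (minsOf S) :=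
  fun _ hp _ hq hne hle => hne (hq.2 _ hp.1 hle)

theorem isAntichain_maxsOf : IsAntichain (· ≤ ·) (maxsOf S) :=
  fun _ hp _ hq hne hle => hne (hp.2 _ hq.1 hle).symm

namespace IsCovPath

theorem left_mem (h : IsCovPath S p q P) : p ∈ P := by
  obtain ⟨L, -, hp, -, rfl⟩ := h
  exact List.mem_of_mem_head? hp

theorem right_mem (h : IsCovPath S p q P) : q ∈ P := by
  obtain ⟨L, -, -, hq, rfl⟩ := h
  exact List.mem_of_mem_getLast? hq

theorem exists_isChain_covIn (h : IsCovPath S p q P) (hqp : ¬ q < p) :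
    ∃ L : List α, L.IsChain (covIn S) ∧ L.head? = some p ∧ L.getLast? = some q ∧
      {x | x ∈ L} = P := by
  obtain ⟨L, hL | hL, hp, hq, rfl⟩ := h
  · exact ⟨L, hL, hp, hq, rfl⟩
  · have hpw : L.Pairwise (fun a b => b < a) :=
      List.isChain_iff_pairwise.mp (hL.imp fun _ _ h => h.2.2.1)
    -- a decreasing path with two or more points ends strictly below `p`
    match L, hp, hq, hpw with
    | [x], hp, hq, _ => exact ⟨[x], List.isChain_singleton x, hp, hq, rfl⟩
    | x :: y :: L, hp, hq, hpw =>
      cases Option.some.inj hp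
      exact absurd (List.rel_of_pairwise_cons hpw
        (List.mem_of_mem_getLast? (by rwa [List.getLast?_cons_cons] at hq))) hqp

theorem mem_Icc (h : IsCovPath S p q P) (hqp : ¬ q < p) {r : α} (hr : r ∈ P) :
    r ∈ Set.Icc p q := by
  obtain ⟨L, hL, hp, hq, rfl⟩ := h.exists_isChain_covIn hqp
  have hpw : L.Pairwise (· ≤ ·) :=
    (List.isChain_iff_pairwise.mp (hL.imp fun _ _ h => h.2.2.1)).imp le_of_lt
  exact ⟨hpw.head_le hp hr, hpw.le_getLast hq hr⟩

theorem isChain (h : IsCovPath S p q P) (hqp : ¬ q < p) : IsChain (· ≤ ·) P := by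
  obtain ⟨L, hL, -, -, rfl⟩ := h.exists_isChain_covIn hqp
  have : Std.Symm fun a b : α => a ≤ b ∨ b ≤ a := ⟨fun _ _ => Or.symm⟩
  exact ((List.isChain_iff_pairwise.mp (hL.imp fun _ _ h => h.2.2.1)).imp
    fun h => Or.inl h.le).forall

end IsCovPath

end Poset

section Antichain

variable {α β : Type*} [PartialOrder α] [LinearOrder β] {A : Set (α × β)} {p q : α × β}

theorem IsAntichain.snd_lt_of_fst_lt (hA : IsAntichain (· ≤ ·) A) (hp : p ∈ A) (hq : q ∈ A)
    (h : p.1 < q.1) : q.2 < p.2 := by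
  by_contra! hle
  exact hA hp hq (fun e => h.ne (congrArg Prod.fst e)) (Prod.le_def.mpr ⟨h.le, hle⟩)

theorem IsAntichain.eq_of_fst_eq (hA : IsAntichain (· ≤ ·) A) (hp : p ∈ A) (hq : q ∈ A)
    (h : p.1 = q.1) : p = q := by
  by_contra hne
  rcases le_total p.2 q.2 with hle | hle
  · exact hA hp hq hne (Prod.le_def.mpr ⟨h.le, hle⟩)
  · exact hA hq hp (Ne.symm hne) (Prod.le_def.mpr ⟨h.ge, hle⟩)

end Antichain

section IntProd

variable {S P : Set (ℤ × ℤ)} {p q : ℤ × ℤ}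

theorem covIn.fst_le_add_one (hS : S.OrdConnected) {a b : ℤ × ℤ} (h : covIn S a b) :
    b.1 ≤ a.1 + 1 := by
  obtain ⟨ha, hb, hab, hcov⟩ := h
  have hab' := Prod.le_def.mp hab.le
  by_contra! hfar
  have ha_lt : a < (a.1 + 1, a.2) := Prod.lt_iff.mpr (Or.inl ⟨lt_add_one _, le_rfl⟩)
  have hlt_b : ((a.1 + 1, a.2) : ℤ × ℤ) < b := Prod.lt_iff.mpr (Or.inl ⟨hfar, hab'.2⟩)
  exact hcov _ (hS.out ha hb ⟨ha_lt.le, hlt_b.le⟩) ha_lt hlt_b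

theorem IsCovPath.exists_fst_eq (hS : S.OrdConnected) (h : IsCovPath S p q P) (hqp : ¬ q < p)
    {a : ℤ} (hpa : p.1 ≤ a) (haq : a ≤ q.1) : ∃ r ∈ P, r.1 = a := by
  obtain ⟨L, hL, hp, hq, rfl⟩ := h.exists_isChain_covIn hqp
  have hsteps : (L.map Prod.fst).IsChain (fun x y => y ≤ x + 1) :=
    List.isChain_map_of_isChain _ (fun _ _ h => h.fst_le_add_one hS) hL
  simpa using List.mem_of_isChain_le_add_one hsteps (by simp [hp]) (by simp [hq]) hpa haq

theorem IsCovPath.mem_bottom_edge (hS : S.OrdConnected) (h : IsCovPath S p q P)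
    (hqp : ¬ q < p) (hcorner : (q.1, p.2) ∈ P) {a : ℤ} (hpa : p.1 ≤ a) (haq : a ≤ q.1) :
    (a, p.2) ∈ P := by
  rcases haq.eq_or_lt with rfl | haq
  · exact hcorner
  obtain ⟨r, hr, rfl⟩ := h.exists_fst_eq hS hqp hpa haq.le
  have hpr := (h.mem_Icc hqp hr).1
  rcases (h.isChain hqp).total hr hcorner with hrc | hcr
  · convert hr using 1
    exact Prod.ext rfl (le_antisymm hpr.2 hrc.2)
  · exact absurd hcr.1 (not_le.mpr haq)

theorem IsCovPath.mem_top_edge (hS : S.OrdConnected) (h : IsCovPath S p q P)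
    (hqp : ¬ q < p) (hcorner : (p.1, q.2) ∈ P) {a : ℤ} (hpa : p.1 ≤ a) (haq : a ≤ q.1) :
    (a, q.2) ∈ P := by
  rcases hpa.eq_or_lt with rfl | hpa
  · exact hcorner
  obtain ⟨r, hr, rfl⟩ := h.exists_fst_eq hS hqp hpa.le haq
  have hrq := (h.mem_Icc hqp hr).2
  rcases (h.isChain hqp).total hr hcorner with hrc | hcr
  · exact absurd hrc.1 (not_le.mpr hpa)
  · convert hr using 1
    exact Prod.ext rfl (le_antisymm hcr.2 hrq.2)

end IntProd

section Boundary

variable {S F B : Set (ℤ × ℤ)} {m : ℤ × ℤ}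

theorem IsLowerFence.row_subset_or_rightmost (hS : S.OrdConnected) (hF : IsLowerFence S F)
    (hm : m ∈ minsOf S) :
    (∃ m' ∈ minsOf S, m.1 < m'.1 ∧ ∀ b, m.1 ≤ b → b ≤ m'.1 → (b, m.2) ∈ F) ∨
      ∀ r ∈ minsOf S, r.1 ≤ m.1 := by
  obtain ⟨l, -, hl, hsort, P₁, _, hpaths, rfl⟩ := hF
  have hml : m ∈ l := by rwa [← hl] at hm
  rcases l.exists_mem_zip_tail_or_getLast?_eq hml with ⟨m', hzip⟩ | hlast
  · have hmm' : m.1 < m'.1 := hsort.rel_of_mem_zip_tail hzip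
    have hm' : m' ∈ minsOf S := hl ▸ List.mem_of_mem_tail (List.of_mem_zip hzip).2
    have hsup : m ⊔ m' = (m'.1, m.2) := Prod.ext (max_eq_right hmm'.le)
      (max_eq_left (isAntichain_minsOf.snd_lt_of_fst_lt hm hm' hmm').le)
    have hpath := (hpaths _ hzip).1
    rw [hsup] at hpath
    refine Or.inl ⟨m', hm', hmm', fun b hb₁ hb₂ => Or.inr (Set.mem_biUnion hzip (Or.inl ?_))⟩
    exact hpath.mem_bottom_edge hS (fun h => h.not_ge (hsup ▸ le_sup_left)) hpath.right_mem
      hb₁ hb₂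
  · have hpw : (l.map Prod.fst).Pairwise (· ≤ ·) :=
      (List.isChain_iff_pairwise.mp ((List.isChain_map _).mpr hsort)).imp le_of_lt
    exact Or.inr fun r hr =>
      hpw.le_getLast (by simp [hlast]) (List.mem_map_of_mem (by rwa [← hl] at hr))

theorem IsUpperFence.row_subset_or_leftmost (hS : S.OrdConnected) (hF : IsUpperFence S F)
    (hm : m ∈ maxsOf S) :
    (∃ m' ∈ maxsOf S, m'.1 < m.1 ∧ ∀ b, m'.1 ≤ b → b ≤ m.1 → (b, m.2) ∈ F) ∨
      ∀ r ∈ maxsOf S, m.1 ≤ r.1 := by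
  obtain ⟨l, -, hl, hsort, _, P₂, hpaths, rfl⟩ := hF
  have hml : m ∈ l := by rwa [← hl] at hm
  rcases l.exists_mem_zip_tail_or_head?_eq hml with ⟨m', hzip⟩ | hhead
  · have hm'm : m'.1 < m.1 := hsort.rel_of_mem_zip_tail hzip
    have hm' : m' ∈ maxsOf S := hl ▸ (List.of_mem_zip hzip).1
    have hinf : m' ⊓ m = (m'.1, m.2) := Prod.ext (min_eq_left hm'm.le)
      (min_eq_right (isAntichain_maxsOf.snd_lt_of_fst_lt hm' hm hm'm).le)
    have hpath := (hpaths _ hzip).2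
    rw [hinf] at hpath
    refine Or.inl ⟨m', hm', hm'm, fun b hb₁ hb₂ => Or.inr (Set.mem_biUnion hzip (Or.inr ?_))⟩
    exact hpath.mem_bottom_edge hS (fun h => h.not_ge (hinf ▸ inf_le_right)) hpath.right_mem
      hb₁ hb₂
  · have hpw : (l.map Prod.fst).Pairwise (· ≤ ·) :=
      (List.isChain_iff_pairwise.mp ((List.isChain_map _).mpr hsort)).imp le_of_lt
    exact Or.inr fun r hr =>
      hpw.head_le (by simp [hhead]) (List.mem_map_of_mem (by rwa [← hl] at hr))

theorem IsBoundary.mem_of_below_notMem (hfin : S.Finite) (hS : S.OrdConnected)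
    (hB : IsBoundary S B) {z : ℤ × ℤ} (hz : z ∈ S) (hbelow : (z.1, z.2 - 1) ∉ S) : z ∈ B := by
  obtain ⟨LF, UF, PL, PR, hLF, -, -, ⟨ps, qt, hps, hqt, hPR, hcorner⟩, rfl⟩ := hB
  obtain ⟨m, hm, hmz⟩ := exists_mem_minsOf_le hfin hz
  have hno_lower_left {x : ℤ × ℤ} (hx : x ∈ S) (hx₁ : x.1 ≤ z.1) (hx₂ : x.2 < z.2) : False :=
    hbelow (hS.out hx hz ⟨Prod.le_def.mpr ⟨hx₁, by omega⟩, Prod.le_def.mpr ⟨le_rfl, by omega⟩⟩)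
  have hm₂ : m.2 = z.2 := hmz.2.eq_of_not_lt fun h => hno_lower_left hm.1 hmz.1 h
  rcases hLF.row_subset_or_rightmost hS hm with ⟨m', hm', hmm', hrow⟩ | hright
  · have hzm' : z.1 ≤ m'.1 := by
      by_contra! h
      exact hno_lower_left hm'.1 h.le (hm₂ ▸ isAntichain_minsOf.snd_lt_of_fst_lt hm hm' hmm')
    have hzLF := hrow z.1 hmz.1 hzm'
    rw [hm₂] at hzLF
    exact Or.inl (Or.inl (Or.inl hzLF))
  · obtain rfl : ps = m := isAntichain_minsOf.eq_of_fst_eq hps.1 hm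
      (le_antisymm (hright _ hps.1) (hps.2 _ hm))
    obtain ⟨w, hw, hzw⟩ := exists_le_mem_maxsOf hfin hz
    have hzPR := hPR.mem_bottom_edge hS (fun h => h.ne (hps.1.2 qt hqt.1.1 h.le)) hcorner hmz.1
      (hzw.1.trans (hqt.2 w hw))
    rw [hm₂] at hzPR
    exact Or.inr hzPR

theorem IsBoundary.mem_of_above_notMem (hfin : S.Finite) (hS : S.OrdConnected)
    (hB : IsBoundary S B) {z : ℤ × ℤ} (hz : z ∈ S) (habove : (z.1, z.2 + 1) ∉ S) : z ∈ B := by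
  obtain ⟨LF, UF, PL, PR, -, hUF, ⟨p₀, q₀, hp₀, hq₀, hPL, hcorner⟩, -, rfl⟩ := hB
  obtain ⟨m, hm, hzm⟩ := exists_le_mem_maxsOf hfin hz
  have hno_upper_right {x : ℤ × ℤ} (hx : x ∈ S) (hx₁ : z.1 ≤ x.1) (hx₂ : z.2 < x.2) : False :=
    habove (hS.out hz hx ⟨Prod.le_def.mpr ⟨le_rfl, by omega⟩, Prod.le_def.mpr ⟨hx₁, by omega⟩⟩)
  have hm₂ : m.2 = z.2 := (hzm.2.eq_of_not_lt fun h => hno_upper_right hm.1 hzm.1 h).symm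
  rcases hUF.row_subset_or_leftmost hS hm with ⟨m', hm', hm'm, hrow⟩ | hleft
  · have hm'z : m'.1 ≤ z.1 := by
      by_contra! h
      exact hno_upper_right hm'.1 h.le (hm₂ ▸ isAntichain_maxsOf.snd_lt_of_fst_lt hm' hm hm'm)
    have hzUF := hrow z.1 hm'z hzm.1
    rw [hm₂] at hzUF
    exact Or.inl (Or.inl (Or.inr hzUF))
  · obtain rfl : q₀ = m := isAntichain_maxsOf.eq_of_fst_eq hq₀.1 hm
      (le_antisymm (hq₀.2 _ hm) (hleft _ hq₀.1))
    obtain ⟨w, hw, hwz⟩ := exists_mem_minsOf_le hfin hz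
    have hzPL := hPL.mem_top_edge hS (fun h => h.ne (hp₀.1.2 q₀ hq₀.1.1 h.le)) hcorner
      ((hp₀.2 w hw).trans hwz.1) hzm.1
    rw [hm₂] at hzPL
    exact Or.inl (Or.inr hzPL)

end Boundary

theorem QZ.zz_eq_of_toZ2_fst_eq {p q : QZ} (h : (toZ2 p).1 = (toZ2 q).1) : p.zz = q.zz := by
  have h' : OrderDual.ofDual p.zz.val.1 + p.zz.val.2 = OrderDual.ofDual q.zz.val.1 + q.zz.val.2 :=
    h
  -- on `ZZ` the sum `i + j` is `2i` or `2i - 1`, which determines `i`, and then `j`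
  rcases p.zz.2 with hp | hp <;> rcases q.zz.2 with hq | hq <;>
    exact Subtype.ext (Prod.ext (OrderDual.ofDual.injective (by omega)) (by omega))

theorem QZ.le_of_toZ2 {p q : QZ} (h₁ : (toZ2 p).1 = (toZ2 q).1) (h₂ : (toZ2 p).2 ≤ (toZ2 q).2) :
    p ≤ q :=
  show (p.zz, p.t) ≤ (q.zz, q.t) from Prod.le_def.mpr ⟨(QZ.zz_eq_of_toZ2_fst_eq h₁).le, h₂⟩

theorem toZ2_below_notMem_image {I : Set QZ} {p : QZ} (hp : p ∈ minsOf I) :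
    ((toZ2 p).1, (toZ2 p).2 - 1) ∉ toZ2 '' I := by
  rintro ⟨q, hq, hqp⟩
  obtain rfl := hp.2 q hq (QZ.le_of_toZ2 (by rw [hqp]) (by rw [hqp]; omega))
  have := congrArg Prod.snd hqp
  omega

theorem toZ2_above_notMem_image {I : Set QZ} {p : QZ} (hp : p ∈ maxsOf I) :
    ((toZ2 p).1, (toZ2 p).2 + 1) ∉ toZ2 '' I := by
  rintro ⟨q, hq, hqp⟩
  obtain rfl := hp.2 q hq (QZ.le_of_toZ2 (by rw [hqp]) (by rw [hqp]; omega))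
  have := congrArg Prod.snd hqp
  omega

/-- For a finite subposet `I ⊆ ZZ × ℤ` whose `ℤ²`-counterpart is an
interval, every minimal and every maximal element of `I` (w.r.t. the `ZZ × ℤ` order) lies
on the boundary `B_I^{ℤ²}`. -/
theorem statement_5 (I : Set QZ) (hfin : I.Finite) (hI : IsIntervalIn (toZ2 '' I))
    (B : Set (ℤ × ℤ)) (hB : IsBoundary (toZ2 '' I) B) :
    toZ2 '' (minsOf I ∪ maxsOf I) ⊆ B := by
  rintro _ ⟨p, hp | hp, rfl⟩
  · exact hB.mem_of_below_notMem (hfin.image _) hI.2 (Set.mem_image_of_mem _ hp.1)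
      (toZ2_below_notMem_image hp)
  · exact hB.mem_of_above_notMem (hfin.image _) hI.2 (Set.mem_image_of_mem _ hp.1)
      (toZ2_above_notMem_image hp)

end
end

section
/- Let M and N be quasi zigzag persistence modules and let ε ≥ 0 be an integer such that for every center p ∈ ZZ × ℤ and every width δ ≥ 0, rk^M(⊞²_δ(p)) ≥ rk^N(⊞²_{δ+ε}(p)) and rk^N(⊞²_δ(p)) ≥ rk^M(⊞²_{δ+ε}(p)). Then |λ^M(p,k) − λ^N(p,k)| ≤ ε for every p ∈ ZZ × ℤ and every k ≥ 1. -/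
/-! A width `δ + ε` at which `M` has rank at least `k` gives, by the erosion condition, a width
`δ` at which `N` has rank at least `k`; hence `λ^M(p,k) ≤ λ^N(p,k) + ε`, and symmetrically. -/

open CategoryTheory CategoryTheory.Limits
open scoped ENNReal

noncomputable section

/-- the generalized rank of `M` over the worm centered at `p` with width `δ ≥ 0` -/
def wormRank {𝕜 : Type} [Field 𝕜] (M : QZ ⥤ FGModuleCat 𝕜) (p : QZ) (δ : ℕ) : ℕ :=
  genRankAt M (worm p (δ : ℤ)) ⟨p, center_mem_worm p (by exact_mod_cast Nat.zero_le δ)⟩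

/-- the two-sided rank comparison condition defining the erosion distance over worms -/
def ErosionCond {𝕜 : Type} [Field 𝕜] (M N : QZ ⥤ FGModuleCat 𝕜) (ε : ℕ) : Prop :=
  ∀ (p : QZ) (δ : ℕ),
    wormRank N p (δ + ε) ≤ wormRank M p δ ∧ wormRank M p (δ + ε) ≤ wormRank N p δ

/-- The ZigZag Generalized Rank Invariant Landscape:
`λ^M(p,k) = sup {δ ≥ 0 : rk^M(⊞²_δ(p)) ≥ k}`. -/
def zzGril {𝕜 : Type} [Field 𝕜] (M : QZ ⥤ FGModuleCat 𝕜) (p : QZ) (k : ℕ) : ℕ∞ :=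
  sSup {e : ℕ∞ | ∃ δ : ℕ, k ≤ wormRank M p δ ∧ e = (δ : ℕ∞)}

/-- the sup-norm distance between two landscapes, over all centers `p` and all `k ≥ 1` -/
def lamDist {𝕜 : Type} [Field 𝕜] (M N : QZ ⥤ FGModuleCat 𝕜) : ℕ∞ :=
  sSup {e : ℕ∞ | ∃ (p : QZ) (k : ℕ), 1 ≤ k ∧
    e = (zzGril M p k - zzGril N p k) ⊔ (zzGril N p k - zzGril M p k)}

lemma sSup_natCast_le_sSup_natCast_add {P Q : ℕ → Prop} (ε : ℕ)
    (hPQ : ∀ δ, P (δ + ε) → Q δ) :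
    sSup {e : ℕ∞ | ∃ δ : ℕ, P δ ∧ e = δ} ≤ sSup {e : ℕ∞ | ∃ δ : ℕ, Q δ ∧ e = δ} + ε := by
  refine sSup_le ?_
  rintro _ ⟨δ, hδ, rfl⟩
  rcases le_or_gt ε δ with hεδ | hδε
  · obtain ⟨d, rfl⟩ := Nat.exists_eq_add_of_le' hεδ
    have hd : (d : ℕ∞) ≤ sSup {e : ℕ∞ | ∃ δ : ℕ, Q δ ∧ e = δ} := le_sSup ⟨d, hPQ d hδ, rfl⟩
    simpa only [Nat.cast_add] using add_le_add_left hd _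
  · exact (Nat.cast_le.mpr hδε.le).trans le_add_self

lemma zzGril_le_zzGril_add {𝕜 : Type} [Field 𝕜] {A B : QZ ⥤ FGModuleCat 𝕜} {ε : ℕ}
    (hAB : ∀ (p : QZ) (δ : ℕ), wormRank A p (δ + ε) ≤ wormRank B p δ) (p : QZ) (k : ℕ) :
    zzGril A p k ≤ zzGril B p k + ε :=
  sSup_natCast_le_sSup_natCast_add ε fun δ hk => hk.trans (hAB p δ)

lemma tsub_sup_tsub_le_of_le_add {α : Type*} [AddCommSemigroup α] [SemilatticeSup α] [Sub α]
    [OrderedSub α] {a b c : α} (hab : a ≤ b + c) (hba : b ≤ a + c) :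
    (a - b) ⊔ (b - a) ≤ c :=
  sup_le (tsub_le_iff_left.mpr hab) (tsub_le_iff_left.mpr hba)

/-- If `ε ≥ 0` is an integer such that for every center `p` and width
`δ ≥ 0` the two-sided rank comparison between `M` and `N` holds at offset `ε`, then
`|λ^M(p,k) − λ^N(p,k)| ≤ ε` for every `p` and every `k ≥ 1`. -/
theorem statement_16 {𝕜 : Type} [Field 𝕜] (M N : QZ ⥤ FGModuleCat 𝕜) (ε : ℕ)
    (h : ErosionCond M N ε) :
    ∀ (p : QZ) (k : ℕ), 1 ≤ k →
      (zzGril M p k - zzGril N p k) ⊔ (zzGril N p k - zzGril M p k) ≤ (ε : ℕ∞) := by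
  intro p k _
  exact tsub_sup_tsub_le_of_le_add
    (zzGril_le_zzGril_add (fun q δ => (h q δ).2) p k)
    (zzGril_le_zzGril_add (fun q δ => (h q δ).1) p k)

end
end
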